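/- (Theorem 3) Under the DMD-GC scheme with approximation error ρ_{t,i_k} = η³/(2σ), for every x* ∈ X the regret satisfies Reg_T := Σ_{t=1}^T f_t(x_t) − Σ_{t=1}^T f_t(x*) ≤ η(G⋆²T + 8ξRG⋆T + 2ηG⋆T + 4G⋆²D_T + 8ηG⋆D_T)/(2σ) + 2η²ξG⋆²D_T/σ² + B_ψ(x*; x₁)/η, where D_T := Σ_{t=1}^T d_t. -/

import Mathlib

/-!
Each inner update is an approximate mirror-descent step. First-order optimality of the exact
minimiser `y`, together with the three-point identity for Bregman divergences, shows that a step
from `b` with gradient `g` moves by at most `(ηG + η²)/σ` and satisfies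
`g (b - u) ≤ (B(u; b) - B(u; x'))/η + O(η)`: the optimisation error `η³/(2σ)` puts `x'` within
`η²/σ` of `y`, which the Lipschitz gradient of `ψ` turns into the `ξ` terms. Summed over all
updates, the Bregman terms telescope to `B(u; x₁)/η`.

The gradient of `f_k` is taken at the iterate `b_k` reached when its feedback arrives, not at
`x_k`; convexity and the gradient bound cost `G ‖x_k - b_k‖`, and `‖x_k - b_k‖` is at most the step
bound times the number of updates made in between. Each such update, for feedback `j`, gives a pair
in which one of `j, k` lies in the delay window of the other, and the lexicographic processing
order makes this assignment injective; hence the counts sum to at most `Σ d_t`.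
-/

open Finset

section Calculus

variable {E : Type*} [NormedAddCommGroup E] [NormedSpace ℝ E] {X : Set E} {a b : E}

theorem ConvexOn.fderiv_apply_sub_le_sub {f : E → ℝ} (hf : ConvexOn ℝ X f)
    (hfa : DifferentiableAt ℝ f a) (ha : a ∈ X) (hb : b ∈ X) :
    fderiv ℝ f a (b - a) ≤ f b - f a := by
  set ℓ : ℝ →ᵃ[ℝ] E := AffineMap.lineMap a b
  have hderiv : HasDerivAt (f ∘ ℓ) (fderiv ℝ f a (b - a)) 0 := by
    have hfa' : HasFDerivAt f (fderiv ℝ f a) (ℓ 0) := by simpa [ℓ] using hfa.hasFDerivAt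
    exact hfa'.comp_hasDerivAt (0 : ℝ) AffineMap.hasDerivAt_lineMap
  simpa [slope, ℓ] using (hf.comp_affineMap ℓ).le_slope_of_hasDerivAt (x := 0) (y := 1)
    (by simpa [ℓ] using ha) (by simpa [ℓ] using hb) zero_lt_one hderiv

theorem ConvexOn.sub_le_of_norm_fderiv_le {f : E → ℝ} {G : ℝ} (hX : Convex ℝ X)
    (hf : ConvexOn ℝ X f) (hfd : Differentiable ℝ f) (hG : ∀ z ∈ X, ‖fderiv ℝ f z‖ ≤ G)
    {u : E} (ha : a ∈ X) (hb : b ∈ X) (hu : u ∈ X) :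
    f a - f u ≤ G * ‖a - b‖ + fderiv ℝ f b (b - u) := by
  have hlip := hX.norm_image_sub_le_of_norm_fderiv_le (fun z _ => hfd z) hG hb ha
  have hgrad := hf.fderiv_apply_sub_le_sub (hfd b) hb hu
  rw [← neg_sub b u, map_neg] at hgrad
  linarith [Real.le_norm_self (f a - f b)]

end Calculus

section Bregman

variable {E : Type*} [NormedAddCommGroup E] [NormedSpace ℝ E] {ψ : E → ℝ}

noncomputable def bregman (ψ : E → ℝ) (a b : E) : ℝ := ψ a - ψ b - fderiv ℝ ψ b (a - b)

@[simp] theorem bregman_self (a : E) : bregman ψ a a = 0 := by simp [bregman]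

theorem bregman_sub_bregman_sub_bregman (w a c : E) :
    bregman ψ w c - bregman ψ w a - bregman ψ a c = (fderiv ℝ ψ a - fderiv ℝ ψ c) (w - a) := by
  simp only [bregman, sub_apply, map_sub]
  ring

theorem hasFDerivAt_bregman_left {a : E} (hψ : DifferentiableAt ℝ ψ a) (b : E) :
    HasFDerivAt (fun z => bregman ψ z b) (fderiv ℝ ψ a - fderiv ℝ ψ b) a := by
  have h := (hψ.hasFDerivAt.sub_const (ψ b)).sub ((fderiv ℝ ψ b).hasFDerivAt.sub_const
    (fderiv ℝ ψ b b))
  refine h.congr_of_eventuallyEq (Filter.Eventually.of_forall fun z => ?_)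
  simp only [bregman, map_sub, Pi.sub_apply]

theorem bregman_nonneg {X : Set E} {σ : ℝ} (hσ : 0 ≤ σ)
    (hsc : ∀ a ∈ X, ∀ c ∈ X, σ / 2 * ‖a - c‖ ^ 2 ≤ bregman ψ a c) {a c : E} (ha : a ∈ X)
    (hc : c ∈ X) : 0 ≤ bregman ψ a c :=
  (by positivity : 0 ≤ σ / 2 * ‖a - c‖ ^ 2).trans (hsc a ha c hc)

theorem bregman_le_bregman_add {a c : E} (hac : 0 ≤ bregman ψ a c) (w : E) :
    bregman ψ w a ≤ bregman ψ w c + ‖fderiv ℝ ψ a - fderiv ℝ ψ c‖ * ‖w - a‖ := by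
  have h3 := bregman_sub_bregman_sub_bregman (ψ := ψ) w a c
  have hop := neg_abs_le ((fderiv ℝ ψ a - fderiv ℝ ψ c) (w - a))
  have hle := (fderiv ℝ ψ a - fderiv ℝ ψ c).le_opNorm (w - a)
  rw [Real.norm_eq_abs] at hle
  linarith

end Bregman

section MirrorStep

variable {E : Type*} [NormedAddCommGroup E] [NormedSpace ℝ E] {X : Set E} {ψ : E → ℝ}
  {g : E →L[ℝ] ℝ} {η σ G : ℝ} {b y z : E}

theorem mirror_step_optimality (hX : Convex ℝ X) (hψ : Differentiable ℝ ψ) (hη : 0 < η)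
    (hy : IsMinOn (fun z => g z + bregman ψ z b / η) X y) (hyX : y ∈ X) (hz : z ∈ X) :
    η * g (y - z) ≤ bregman ψ z b - bregman ψ z y - bregman ψ y b := by
  have hderiv : HasFDerivAt (fun z => g z + bregman ψ z b / η)
      (g + η⁻¹ • (fderiv ℝ ψ y - fderiv ℝ ψ b)) y := by
    refine HasFDerivAt.congr_of_eventuallyEq
      (g.hasFDerivAt.add ((hasFDerivAt_bregman_left (hψ y) b).const_mul η⁻¹))
      (Filter.Eventually.of_forall fun z => ?_)
    simp only [Pi.add_apply, div_eq_inv_mul]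
  have hfirst := hy.localize.hasFDerivWithinAt_nonneg hderiv.hasFDerivWithinAt
    (sub_mem_posTangentConeAt_of_segment_subset (hX.segment_subset hyX hz))
  simp only [add_apply, smul_apply, smul_eq_mul] at hfirst
  have hscaled := mul_nonneg hη.le hfirst
  rw [mul_add, mul_inv_cancel_left₀ hη.ne'] at hscaled
  rw [bregman_sub_bregman_sub_bregman, ← neg_sub z y, map_neg]
  linarith

theorem mirror_step_norm_sub_le (hX : Convex ℝ X) (hψ : Differentiable ℝ ψ) (hη : 0 < η)
    (hσ : 0 < σ) (hsc : ∀ a ∈ X, ∀ c ∈ X, σ / 2 * ‖a - c‖ ^ 2 ≤ bregman ψ a c) (hg : ‖g‖ ≤ G)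
    (hy : IsMinOn (fun z => g z + bregman ψ z b / η) X y) (hyX : y ∈ X) (hbX : b ∈ X) :
    ‖y - b‖ ≤ η * G / σ := by
  have hopt := mirror_step_optimality hX hψ hη hy hyX hbX
  rw [bregman_self] at hopt
  have hby := hsc b hbX y hyX
  have hyb := hsc y hyX b hbX
  have hgby := (Real.le_norm_self _).trans (g.le_of_opNorm_le hg (b - y))
  rw [← neg_sub b y, map_neg] at hopt
  rw [norm_sub_rev] at hby hgby
  rw [le_div_iff₀ hσ]
  rcases (norm_nonneg (y - b)).eq_or_lt with h0 | h0
  · rw [← h0, zero_mul]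
    exact mul_nonneg hη.le ((norm_nonneg g).trans hg)
  · have hsq : σ * ‖y - b‖ * ‖y - b‖ ≤ η * G * ‖y - b‖ := by
      linarith [mul_le_mul_of_nonneg_left hgby hη.le]
    linarith [le_of_mul_le_mul_right hsq h0]

theorem bregman_le_of_approx_isMinOn (hX : Convex ℝ X) (hψ : Differentiable ℝ ψ) (hη : 0 < η)
    (hy : IsMinOn (fun z => g z + bregman ψ z b / η) X y) (hyX : y ∈ X) {x : E} (hx : x ∈ X)
    {ρ : ℝ} (happ : g x + bregman ψ x b / η ≤ g y + bregman ψ y b / η + ρ) :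
    bregman ψ x y ≤ η * ρ := by
  have hopt := mirror_step_optimality hX hψ hη hy hyX hx
  have hscaled := mul_le_mul_of_nonneg_left happ hη.le
  simp only [mul_add, mul_div_cancel₀ _ hη.ne'] at hscaled
  rw [map_sub] at hopt
  linarith

theorem mirror_step_apply_sub_le (hX : Convex ℝ X) (hψ : Differentiable ℝ ψ) (hη : 0 < η)
    (hσ : 0 < σ) (hsc : ∀ a ∈ X, ∀ c ∈ X, σ / 2 * ‖a - c‖ ^ 2 ≤ bregman ψ a c) (hg : ‖g‖ ≤ G)
    (hy : IsMinOn (fun z => g z + bregman ψ z b / η) X y) (hyX : y ∈ X) (hbX : b ∈ X)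
    {x u : E} (hx : x ∈ X) (hu : u ∈ X) :
    η * g (b - u) ≤ bregman ψ u b - bregman ψ u x + η ^ 2 * G ^ 2 / (2 * σ)
      + ‖fderiv ℝ ψ x - fderiv ℝ ψ y‖ * ‖u - x‖ := by
  have hopt := mirror_step_optimality hX hψ hη hy hyX hu
  have hyb := hsc y hyX b hbX
  have hux := bregman_le_bregman_add (bregman_nonneg hσ.le hsc hx hyX) u
  have hgby := (Real.le_norm_self _).trans (g.le_of_opNorm_le hg (b - y))
  rw [norm_sub_rev] at hgby
  -- AM-GM
  have hamgm : η * G * ‖y - b‖ - σ / 2 * ‖y - b‖ ^ 2 ≤ η ^ 2 * G ^ 2 / (2 * σ) := by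
    rw [le_div_iff₀ (by positivity)]
    nlinarith [sq_nonneg (σ * ‖y - b‖ - η * G)]
  have hsplit : η * g (b - u) = η * g (b - y) + η * g (y - u) := by
    rw [← mul_add, ← map_add, sub_add_sub_cancel]
  linarith [mul_le_mul_of_nonneg_left hgby hη.le]

theorem approx_mirror_step (hX : Convex ℝ X) (hψ : Differentiable ℝ ψ) (hη : 0 < η)
    (hσ : 0 < σ) (hsc : ∀ a ∈ X, ∀ c ∈ X, σ / 2 * ‖a - c‖ ^ 2 ≤ bregman ψ a c) {L R : ℝ}
    (hL : 0 ≤ L) (hlip : ∀ a ∈ X, ∀ c ∈ X, ‖fderiv ℝ ψ a - fderiv ℝ ψ c‖ ≤ L * ‖a - c‖)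
    (hR : ∀ z ∈ X, ‖z‖ ≤ R) (hg : ‖g‖ ≤ G)
    (hy : IsMinOn (fun z => g z + bregman ψ z b / η) X y) (hyX : y ∈ X) (hbX : b ∈ X)
    {x u : E} (hx : x ∈ X) (hu : u ∈ X)
    (happ : g x + bregman ψ x b / η ≤ g y + bregman ψ y b / η + η ^ 3 / (2 * σ)) :
    ‖x - b‖ ≤ (η * G + η ^ 2) / σ ∧
      g (b - u) ≤ (bregman ψ u b - bregman ψ u x) / η
        + (η * G ^ 2 / (2 * σ) + 2 * R * L * η / σ) := by
  have hxy : ‖x - y‖ ≤ η ^ 2 / σ := by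
    have h := (hsc x hx y hyX).trans (bregman_le_of_approx_isMinOn hX hψ hη hy hyX hx happ)
    rw [← pow_le_pow_iff_left₀ (norm_nonneg _) (by positivity) two_ne_zero]
    rw [div_pow, le_div_iff₀ (by positivity)]
    field_simp at h
    nlinarith
  have hyb := mirror_step_norm_sub_le hX hψ hη hσ hsc hg hy hyX hbX
  refine ⟨?_, ?_⟩
  · calc ‖x - b‖ ≤ ‖x - y‖ + ‖y - b‖ := norm_sub_le_norm_sub_add_norm_sub x y b
      _ ≤ η ^ 2 / σ + η * G / σ := add_le_add hxy hyb
      _ = (η * G + η ^ 2) / σ := by ring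
  · have hux : ‖u - x‖ ≤ 2 * R := by
      linarith [norm_sub_le u x, hR u hu, hR x hx]
    have hgrad : ‖fderiv ℝ ψ x - fderiv ℝ ψ y‖ * ‖u - x‖ ≤ L * (η ^ 2 / σ) * (2 * R) :=
      mul_le_mul ((hlip x hx y hyX).trans (mul_le_mul_of_nonneg_left hxy hL)) hux
        (norm_nonneg _) (by positivity)
    have h := mirror_step_apply_sub_le hX hψ hη hσ hsc hg hy hyX hbX hx hu
    rw [← mul_le_mul_iff_of_pos_left hη]
    have hrhs : η * ((bregman ψ u b - bregman ψ u x) / η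
          + (η * G ^ 2 / (2 * σ) + 2 * R * L * η / σ))
        = bregman ψ u b - bregman ψ u x + η ^ 2 * G ^ 2 / (2 * σ) + L * (η ^ 2 / σ) * (2 * R) := by
      field_simp
      ring
    linarith

end MirrorStep

section Schedule

variable {α : Type*} [LinearOrder α]

theorem card_filter_lt_lt_card {s : Finset α} {k : α} (hk : k ∈ s) :
    (s.filter (· < k)).card < s.card :=
  card_lt_card (filter_ssubset.2 ⟨k, hk, lt_irrefl k⟩)

theorem strictMonoOn_card_filter_lt (s : Finset α) :
    StrictMonoOn (fun k => (s.filter (· < k)).card) s := by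
  intro a ha b _ hab
  refine card_lt_card ((ssubset_iff_of_subset fun x => ?_).2 ⟨a, by simpa [hab] using ha, by simp⟩)
  simp only [mem_filter, and_imp]
  exact fun hx hxa => ⟨hx, hxa.trans hab⟩

theorem image_card_filter_lt (s : Finset α) :
    s.image (fun k => (s.filter (· < k)).card) = range s.card := by
  refine eq_of_subset_of_card_le (fun i hi => ?_) ?_
  · obtain ⟨k, hk, rfl⟩ := mem_image.1 hi
    exact mem_range.2 (card_filter_lt_lt_card hk)
  · rw [card_range, card_image_of_injOn (strictMonoOn_card_filter_lt s).injOn]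

theorem sum_card_filter_lt {M : Type*} [AddCommMonoid M] (s : Finset α) (φ : ℕ → M) :
    ∑ k ∈ s, φ (s.filter (· < k)).card = ∑ i ∈ range s.card, φ i := by
  rw [← image_card_filter_lt s, sum_image (strictMonoOn_card_filter_lt s).injOn]

end Schedule

section DelayedSchedule

variable {s : Finset ℕ} {τ : ℕ → ℕ} {F : ℕ → Finset ℕ}

theorem sum_card_Ico_add_card_filter_lt_eq (hF : ∀ t, F t = s.filter (fun k => τ k = t)) {k : ℕ}
    (hk : k ≤ τ k) :
    ∑ r ∈ Ico k (τ k), (F r).card + ((F (τ k)).filter (· < k)).card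
      = (s.filter (fun j => k ≤ τ j ∧ toLex (τ j, j) < toLex (τ k, k))).card := by
  have hsplit : s.filter (fun j => k ≤ τ j ∧ toLex (τ j, j) < toLex (τ k, k))
      = s.filter (fun j => τ j ∈ Ico k (τ k)) ∪ (F (τ k)).filter (· < k) := by
    ext j
    by_cases hj : j ∈ s <;> simp only [hF, hj, mem_union, mem_filter, mem_Ico, true_and,
      false_and, false_or, Prod.Lex.toLex_lt_toLex]
    omega
  have hdisj : Disjoint (s.filter (fun j => τ j ∈ Ico k (τ k))) ((F (τ k)).filter (· < k)) := by
    rw [disjoint_left]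
    intro j hj hj'
    simp only [hF, mem_filter, mem_Ico] at hj hj'
    omega
  rw [hsplit, card_union_of_disjoint hdisj,
    card_eq_sum_card_fiberwise (s := s.filter (fun j => τ j ∈ Ico k (τ k))) (f := τ)
      (fun j hj => (mem_filter.1 hj).2)]
  congr 1
  refine sum_congr rfl fun r hr => ?_
  rw [hF, filter_filter]
  congr 1
  ext j
  simp only [mem_filter, mem_Ico] at hr ⊢
  constructor
  · rintro ⟨hj, rfl⟩; exact ⟨hj, hr, rfl⟩
  · rintro ⟨hj, -, rfl⟩; exact ⟨hj, rfl⟩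

theorem sum_card_filter_lex_lt_le (hτ : ∀ k ∈ s, k ≤ τ k) :
    ∑ k ∈ s, (s.filter (fun j => k ≤ τ j ∧ toLex (τ j, j) < toLex (τ k, k))).card
      ≤ ∑ k ∈ s, (τ k - k) := by
  rw [← card_sigma]
  -- `(k, j) ↦ (min k j, max k j)`: the larger index lies in the delay window of the smaller one.
  calc _ ≤ (s.sigma fun a => s.filter (fun b => a < b ∧ b ≤ τ a)).card := by
        refine card_le_card_of_injOn (fun p => ⟨min p.1 p.2, max p.1 p.2⟩) ?_ ?_
        · rintro ⟨k, j⟩ hp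
          simp only [coe_sigma, Set.mem_sigma_iff, mem_coe, mem_filter,
            Prod.Lex.toLex_lt_toLex] at hp ⊢
          have := hτ j hp.2.1
          have hne : k ≠ j := by rintro rfl; omega
          rcases le_total k j with h | h
          · simp only [min_eq_left h, max_eq_right h]
            exact ⟨hp.1, hp.2.1, by omega, by omega⟩
          · simp only [min_eq_right h, max_eq_left h]
            exact ⟨hp.2.1, hp.1, by omega, by omega⟩
        · rintro ⟨k, j⟩ hp ⟨k', j'⟩ hq heq
          simp only [coe_sigma, Set.mem_sigma_iff, mem_coe, mem_filter, Sigma.mk.inj_iff,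
            heq_eq_eq, Prod.Lex.toLex_lt_toLex] at hp hq heq ⊢
          obtain ⟨rfl, rfl⟩ | ⟨rfl, rfl⟩ : (k = k' ∧ j = j') ∨ (k = j' ∧ j = k') := by omega
          · exact ⟨rfl, rfl⟩
          · omega
    _ = ∑ a ∈ s, (s.filter (fun b => a < b ∧ b ≤ τ a)).card := card_sigma _ _
    _ ≤ ∑ a ∈ s, (τ a - a) := sum_le_sum fun a _ => by
        refine (card_le_card fun b hb => ?_).trans (Nat.card_Ioc a (τ a)).le
        simp only [mem_filter, mem_Ioc] at hb ⊢
        exact hb.2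

end DelayedSchedule

section DelayedIterates

variable {T : ℕ} {F : ℕ → Finset ℕ}

theorem sum_delayed_telescope {α M : Type*} [AddCommGroup M] {τ : ℕ → ℕ}
    (hτ : ∀ k ∈ Icc 1 T, τ k ∈ Icc 1 T) (hF : ∀ t, F t = (Icc 1 T).filter (fun k => τ k = t))
    {x : ℕ → α} {xx : ℕ → ℕ → α} (hxx0 : ∀ t ∈ Icc 1 T, xx t 0 = x t)
    (hxnext : ∀ t ∈ Icc 1 T, x (t + 1) = xx t (F t).card) (φ : α → M) :
    ∑ k ∈ Icc 1 T, (φ (xx (τ k) ((F (τ k)).filter (· < k)).card)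
        - φ (xx (τ k) (((F (τ k)).filter (· < k)).card + 1)))
      = φ (x 1) - φ (x (T + 1)) := by
  rw [← sum_fiberwise_of_maps_to hτ]
  have hround : ∀ t ∈ Icc 1 T, ∑ k ∈ (Icc 1 T).filter (fun k => τ k = t),
      (φ (xx (τ k) ((F (τ k)).filter (· < k)).card)
        - φ (xx (τ k) (((F (τ k)).filter (· < k)).card + 1))) = φ (x t) - φ (x (t + 1)) := by
    intro t ht
    have hτt : ∀ k ∈ F t, τ k = t := fun k hk => by rw [hF, mem_filter] at hk; exact hk.2
    rw [← hF t]
    calc _ = ∑ k ∈ F t, (φ (xx t ((F t).filter (· < k)).card)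
          - φ (xx t (((F t).filter (· < k)).card + 1))) :=
          sum_congr rfl fun k hk => by rw [hτt k hk]
      _ = _ := by
          rw [sum_card_filter_lt (F t) fun i => φ (xx t i) - φ (xx t (i + 1)), sum_range_sub',
            hxx0 t ht, hxnext t ht]
  rw [sum_congr rfl hround, ← Ico_add_one_right_eq_Icc, ← neg_sub,
    ← sum_Ico_sub (fun t => φ (x t)) (by omega : 1 ≤ T + 1), ← sum_neg_distrib]
  simp only [neg_sub]

theorem norm_sub_le_of_norm_step_le {E : Type*} [SeminormedAddCommGroup E] {x : ℕ → E}
    {xx : ℕ → ℕ → E} (hxx0 : ∀ t ∈ Icc 1 T, xx t 0 = x t)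
    (hxnext : ∀ t ∈ Icc 1 T, x (t + 1) = xx t (F t).card) {S : ℝ}
    (hstep : ∀ t ∈ Icc 1 T, ∀ j < (F t).card, ‖xx t (j + 1) - xx t j‖ ≤ S)
    {k t i : ℕ} (hk : 1 ≤ k) (hkt : k ≤ t) (ht : t ≤ T) (hi : i ≤ (F t).card) :
    ‖x k - xx t i‖ ≤ (∑ r ∈ Ico k t, (F r).card + i : ℕ) * S := by
  have hround : ∀ r ∈ Icc 1 T, ∀ i ≤ (F r).card, dist (xx r 0) (xx r i) ≤ i * S := by
    intro r hr i hi
    simpa using dist_le_Ico_sum_of_dist_le (f := xx r) (Nat.zero_le i) (d := fun _ => S)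
      fun _ hj => by rw [dist_comm, dist_eq_norm]; exact hstep r hr _ (by omega)
  have hacross : dist (x k) (x t) ≤ ∑ r ∈ Ico k t, (F r).card * S :=
    dist_le_Ico_sum_of_dist_le hkt fun {r} hkr hrt => by
      have hr : r ∈ Icc 1 T := mem_Icc.2 ⟨by omega, by omega⟩
      rw [← hxx0 _ hr, hxnext _ hr]
      exact hround _ hr _ le_rfl
  have hin := hround t (mem_Icc.2 ⟨by omega, ht⟩) i hi
  rw [hxx0 t (mem_Icc.2 ⟨by omega, ht⟩)] at hin
  rw [← dist_eq_norm, Nat.cast_add, Nat.cast_sum, add_mul, sum_mul]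
  exact (dist_triangle _ _ _).trans (add_le_add hacross hin)

theorem mem_of_delayed_iterates {α : Type*} {X : Set α} {x : ℕ → α} {xx : ℕ → ℕ → α}
    (hx1 : x 1 ∈ X) (hxxmem : ∀ t ∈ Icc 1 T, ∀ i ≤ (F t).card, xx t i ∈ X)
    (hxnext : ∀ t ∈ Icc 1 T, x (t + 1) = xx t (F t).card) :
    ∀ k, 1 ≤ k → k ≤ T + 1 → x k ∈ X
  | 0, h, _ => absurd h (by omega)
  | 1, _, _ => hx1
  | k + 2, _, h => by
    rw [hxnext (k + 1) (mem_Icc.2 ⟨by omega, by omega⟩)]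
    exact hxxmem _ (mem_Icc.2 ⟨by omega, by omega⟩) _ le_rfl

end DelayedIterates

theorem delayed_regret_le {E : Type*} [NormedAddCommGroup E] [NormedSpace ℝ E] {X : Set E}
    (hX : Convex ℝ X) {T : ℕ} {τ : ℕ → ℕ} (hτ : ∀ k ∈ Icc 1 T, k ≤ τ k ∧ τ k ≤ T)
    {F : ℕ → Finset ℕ} (hF : ∀ t, F t = (Icc 1 T).filter (fun k => τ k = t))
    {f : ℕ → E → ℝ} {G : ℝ} (hfdiff : ∀ t ∈ Icc 1 T, Differentiable ℝ (f t))
    (hfconv : ∀ t ∈ Icc 1 T, ConvexOn ℝ X (f t))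
    (hG : ∀ t ∈ Icc 1 T, ∀ z ∈ X, ‖fderiv ℝ (f t) z‖ ≤ G)
    {x : ℕ → E} {xx : ℕ → ℕ → E} (hx1 : x 1 ∈ X)
    (hxxmem : ∀ t ∈ Icc 1 T, ∀ i ≤ (F t).card, xx t i ∈ X)
    (hxx0 : ∀ t ∈ Icc 1 T, xx t 0 = x t) (hxnext : ∀ t ∈ Icc 1 T, x (t + 1) = xx t (F t).card)
    {φ : E → ℝ} (hφ : ∀ z ∈ X, 0 ≤ φ z) {u : E} (hu : u ∈ X) {η S c : ℝ} (hη : 0 < η)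
    (hG0 : 0 ≤ G) (hS : 0 ≤ S)
    (hstep : ∀ t ∈ Icc 1 T, ∀ k ∈ F t,
      ‖xx t (((F t).filter (· < k)).card + 1) - xx t ((F t).filter (· < k)).card‖ ≤ S ∧
      fderiv ℝ (f k) (xx t ((F t).filter (· < k)).card) (xx t ((F t).filter (· < k)).card - u)
        ≤ (φ (xx t ((F t).filter (· < k)).card)
            - φ (xx t (((F t).filter (· < k)).card + 1))) / η + c) :
    ∑ t ∈ Icc 1 T, (f t (x t) - f t u)
      ≤ φ (x 1) / η + T * c + G * S * ∑ t ∈ Icc 1 T, ((τ t - t : ℕ) : ℝ) := by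
  have hx := mem_of_delayed_iterates hx1 hxxmem hxnext
  have hmemF : ∀ k ∈ Icc 1 T, k ∈ F (τ k) ∧ τ k ∈ Icc 1 T := fun k hk =>
    ⟨hF (τ k) ▸ mem_filter.2 ⟨hk, rfl⟩,
      mem_Icc.2 ⟨(mem_Icc.1 hk).1.trans (hτ k hk).1, (hτ k hk).2⟩⟩
  have hsteps : ∀ t ∈ Icc 1 T, ∀ j < (F t).card, ‖xx t (j + 1) - xx t j‖ ≤ S := by
    intro t ht j hj
    rw [← mem_range, ← image_card_filter_lt, mem_image] at hj
    obtain ⟨k, hk, rfl⟩ := hj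
    exact (hstep t ht k hk).1
  -- the number of inner updates between `x k` and the iterate at which `f k`'s gradient is taken
  set N : ℕ → ℕ := fun k => ∑ r ∈ Ico k (τ k), (F r).card + ((F (τ k)).filter (· < k)).card
  have hround : ∀ k ∈ Icc 1 T, f k (x k) - f k u
      ≤ (φ (xx (τ k) ((F (τ k)).filter (· < k)).card)
          - φ (xx (τ k) (((F (τ k)).filter (· < k)).card + 1))) / η + c + G * S * N k := by
    intro k hk
    obtain ⟨hkF, hτk⟩ := hmemF k hk
    obtain ⟨hk1, hkT⟩ := mem_Icc.1 hk
    have hrank := (card_filter_lt_lt_card hkF).le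
    have hdelayed := (hfconv k hk).sub_le_of_norm_fderiv_le hX (hfdiff k hk) (hG k hk)
      (hx k hk1 (by omega)) (hxxmem _ hτk _ hrank) hu
    have hdist := mul_le_mul_of_nonneg_left (norm_sub_le_of_norm_step_le hxx0 hxnext hsteps
      hk1 (hτ k hk).1 (hτ k hk).2 hrank) hG0
    linarith [(hstep _ hτk k hkF).2]
  have hcount : ∑ k ∈ Icc 1 T, (N k : ℝ) ≤ ∑ t ∈ Icc 1 T, ((τ t - t : ℕ) : ℝ) := by
    rw [← Nat.cast_sum, ← Nat.cast_sum, Nat.cast_le,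
      sum_congr rfl fun k hk => sum_card_Ico_add_card_filter_lt_eq hF (hτ k hk).1]
    exact sum_card_filter_lex_lt_le fun k hk => (hτ k hk).1
  have htel := sum_delayed_telescope (fun k hk => (hmemF k hk).2) hF hxx0 hxnext φ
  have hφT := hφ _ (hx (T + 1) (by omega) le_rfl)
  calc ∑ t ∈ Icc 1 T, (f t (x t) - f t u)
      ≤ (φ (x 1) - φ (x (T + 1))) / η + T * c + G * S * ∑ k ∈ Icc 1 T, (N k : ℝ) := by
        refine (sum_le_sum hround).trans_eq ?_
        rw [sum_add_distrib, sum_add_distrib, ← sum_div, htel, sum_const, Nat.card_Icc,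
          nsmul_eq_mul, ← mul_sum]
        simp
    _ ≤ _ := by
        gcongr ?_ / _ + _ + _ * ?_
        linarith

theorem dmd_gc_regret_general
    {E : Type*} [NormedAddCommGroup E] [NormedSpace ℝ E]
    (X : Set E) (hX : Convex ℝ X)
    (R : ℝ) (hR : ∀ z ∈ X, ‖z‖ ≤ R)
    (T : ℕ) (hT : 1 ≤ T) (d : ℕ → ℕ)
    (hd : ∀ t ∈ Finset.Icc 1 T, 1 ≤ d t ∧ t + d t - 1 ≤ T)
    (F : ℕ → Finset ℕ)
    (hF : ∀ t, F t = (Finset.Icc 1 T).filter (fun k => k + d k - 1 = t))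
    (f : ℕ → E → ℝ) (Gstar : ℝ)
    (hfdiff : ∀ t ∈ Finset.Icc 1 T, Differentiable ℝ (f t))
    (hfconv : ∀ t ∈ Finset.Icc 1 T, ConvexOn ℝ X (f t))
    (hG : ∀ t ∈ Finset.Icc 1 T, ∀ z ∈ X, ‖fderiv ℝ (f t) z‖ ≤ Gstar)
    (ψ : E → ℝ) (σ ξ : ℝ) (hσ : 0 < σ) (hξ : 0 < ξ)
    (hψdiff : Differentiable ℝ ψ)
    (B : E → E → ℝ)
    (hB : ∀ a b, B a b = ψ a - ψ b - fderiv ℝ ψ b (a - b))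
    (hψsc : ∀ a ∈ X, ∀ b ∈ X, B a b ≥ σ / 2 * ‖a - b‖ ^ 2)
    (hψlip : ∀ a ∈ X, ∀ b ∈ X,
      ‖fderiv ℝ ψ a - fderiv ℝ ψ b‖ ≤ ξ * Gstar * ‖a - b‖)
    (η : ℝ) (hη : 0 < η)
    (x : ℕ → E) (xx : ℕ → ℕ → E) (hx1 : x 1 ∈ X)
    (hxxmem : ∀ t ∈ Finset.Icc 1 T, ∀ i ≤ (F t).card, xx t i ∈ X)
    (hxx0 : ∀ t ∈ Finset.Icc 1 T, xx t 0 = x t)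
    (hxnext : ∀ t ∈ Finset.Icc 1 T, x (t + 1) = xx t (F t).card)
    (A : ℕ → ℕ → E → ℝ)
    (hA : ∀ t k z, A t k z =
      fderiv ℝ (f k) (xx t ((F t).filter (fun s => s < k)).card) z
        + B z (xx t ((F t).filter (fun s => s < k)).card) / η)
    (hopt : ∀ t ∈ Finset.Icc 1 T, ∀ k ∈ F t, ∃ ystar ∈ X,
      IsMinOn (A t k) X ystar ∧
        A t k (xx t (((F t).filter (fun s => s < k)).card + 1))
          ≤ A t k ystar + η ^ 3 / (2 * σ))
    :
    ∀ xstar ∈ X,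
      ∑ t ∈ Finset.Icc 1 T, f t (x t) - ∑ t ∈ Finset.Icc 1 T, f t xstar
        ≤ η * (Gstar ^ 2 * (T : ℝ) + 8 * ξ * R * Gstar * (T : ℝ)
              + 2 * η * Gstar * (T : ℝ)
              + 4 * Gstar ^ 2 * ∑ t ∈ Finset.Icc 1 T, (d t : ℝ)
              + 8 * η * Gstar * ∑ t ∈ Finset.Icc 1 T, (d t : ℝ)) / (2 * σ)
          + 2 * η ^ 2 * ξ * Gstar ^ 2 * (∑ t ∈ Finset.Icc 1 T, (d t : ℝ)) / σ ^ 2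
          + B xstar (x 1) / η := by
  intro u hu
  have hG0 : 0 ≤ Gstar := (norm_nonneg _).trans (hG 1 (mem_Icc.2 ⟨le_rfl, hT⟩) u hu)
  have hR0 : 0 ≤ R := (norm_nonneg _).trans (hR u hu)
  obtain rfl : B = bregman ψ := funext₂ hB
  have hregret := delayed_regret_le hX (τ := fun k => k + d k - 1)
    (fun k hk => ⟨by have := hd k hk; omega, (hd k hk).2⟩) hF hfdiff hfconv hG hx1 hxxmem hxx0
    hxnext (fun z hz => bregman_nonneg hσ.le hψsc hu hz) hu hη hG0
    (S := (η * Gstar + η ^ 2) / σ) (c := η * Gstar ^ 2 / (2 * σ) + 2 * R * (ξ * Gstar) * η / σ)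
    (by positivity) fun t ht k hk => by
      obtain ⟨y, hyX, hymin, happ⟩ := hopt t ht k hk
      rw [funext (hA t k)] at hymin happ
      have hrank := card_filter_lt_lt_card hk
      rw [hF, mem_filter] at hk
      exact approx_mirror_step hX hψdiff hη hσ hψsc (by positivity) hψlip hR
        (hG k hk.1 _ (hxxmem t ht _ hrank.le)) hymin hyX (hxxmem t ht _ hrank.le)
        (hxxmem t ht (_ + 1) hrank) hu happ
  have hdelay : ∑ t ∈ Icc 1 T, ((t + d t - 1 - t : ℕ) : ℝ) ≤ ∑ t ∈ Icc 1 T, (d t : ℝ) :=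
    sum_le_sum fun t _ => by exact_mod_cast (by omega)
  have hD : 0 ≤ ∑ t ∈ Icc 1 T, (d t : ℝ) := sum_nonneg fun t _ => Nat.cast_nonneg _
  rw [← sum_sub_distrib]
  grw [hregret, hdelay, ← sub_nonneg]
  field_simp
  ring_nf
  positivity

/-- Theorem 3: DMD-GC regret bound. -/
theorem dmd_gc_regret
    {E : Type*} [NormedAddCommGroup E] [NormedSpace ℝ E]
    (X : Set E) (hXne : X.Nonempty) (hX : Convex ℝ X)
    (R : ℝ) (hR : ∀ z ∈ X, ‖z‖ ≤ R)
    (T : ℕ) (hT : 1 ≤ T) (d : ℕ → ℕ)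
    (hd : ∀ t ∈ Finset.Icc 1 T, 1 ≤ d t ∧ t + d t - 1 ≤ T)
    (F : ℕ → Finset ℕ)
    (hF : ∀ t, F t = (Finset.Icc 1 T).filter (fun k => k + d k - 1 = t))
    (f : ℕ → E → ℝ) (Gstar : ℝ)
    (hfdiff : ∀ t ∈ Finset.Icc 1 T, Differentiable ℝ (f t))
    (hfconv : ∀ t ∈ Finset.Icc 1 T, ConvexOn ℝ X (f t))
    (hG : ∀ t ∈ Finset.Icc 1 T, ∀ z ∈ X, ‖fderiv ℝ (f t) z‖ ≤ Gstar)
    (ψ : E → ℝ) (σ ξ : ℝ) (hσ : 0 < σ) (hξ : 0 < ξ)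
    (hψdiff : Differentiable ℝ ψ)
    (B : E → E → ℝ)
    (hB : ∀ a b, B a b = ψ a - ψ b - fderiv ℝ ψ b (a - b))
    (hψsc : ∀ a ∈ X, ∀ b ∈ X, B a b ≥ σ / 2 * ‖a - b‖ ^ 2)
    (hψlip : ∀ a ∈ X, ∀ b ∈ X,
      ‖fderiv ℝ ψ a - fderiv ℝ ψ b‖ ≤ ξ * Gstar * ‖a - b‖)
    (η : ℝ) (hη : 0 < η)
    (x : ℕ → E) (xx : ℕ → ℕ → E) (hx1 : x 1 ∈ X)
    (hxxmem : ∀ t ∈ Finset.Icc 1 T, ∀ i ≤ (F t).card, xx t i ∈ X)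
    (hxx0 : ∀ t ∈ Finset.Icc 1 T, xx t 0 = x t)
    (hxnext : ∀ t ∈ Finset.Icc 1 T, x (t + 1) = xx t (F t).card)
    (A : ℕ → ℕ → E → ℝ)
    (hA : ∀ t k z, A t k z =
      fderiv ℝ (f k) (xx t ((F t).filter (fun s => s < k)).card) z
        + B z (xx t ((F t).filter (fun s => s < k)).card) / η)
    (hopt : ∀ t ∈ Finset.Icc 1 T, ∀ k ∈ F t, ∃ ystar ∈ X,
      IsMinOn (A t k) X ystar ∧
        A t k (xx t (((F t).filter (fun s => s < k)).card + 1))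
          ≤ A t k ystar + η ^ 3 / (2 * σ))
    :
    ∀ xstar ∈ X,
      ∑ t ∈ Finset.Icc 1 T, f t (x t) - ∑ t ∈ Finset.Icc 1 T, f t xstar
        ≤ η * (Gstar ^ 2 * (T : ℝ) + 8 * ξ * R * Gstar * (T : ℝ)
              + 2 * η * Gstar * (T : ℝ)
              + 4 * Gstar ^ 2 * ∑ t ∈ Finset.Icc 1 T, (d t : ℝ)
              + 8 * η * Gstar * ∑ t ∈ Finset.Icc 1 T, (d t : ℝ)) / (2 * σ)
          + 2 * η ^ 2 * ξ * Gstar ^ 2 * (∑ t ∈ Finset.Icc 1 T, (d t : ℝ)) / σ ^ 2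
          + B xstar (x 1) / η :=
  dmd_gc_regret_general X hX R hR T hT d hd F hF f Gstar hfdiff hfconv hG ψ σ ξ hσ hξ hψdiff B hB
    hψsc hψlip η hη x xx hx1 hxxmem hxx0 hxnext A hA hopt
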